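/- arXiv:2506.05638 — 8 statements merged into one kernel-verified Lean document; each statement's English description precedes it below -/
import Mathlib

section
/- If every right-extension of a string w1 is also a right-extension of a string w2 (i.e., E_r(w1) ⊆ E_r(w2)), then sre(w1) ≤ sre(w2), where sre(w) is the number of supermaximal right-extensions of w. -/
variable {α : Type*}

/-- `x` is a right-maximal substring of `w`. -/
def RightMaximal (w x : List α) : Prop :=
  ∃ a b : α, a ≠ b ∧ (x ++ [a]) <:+: w ∧ (x ++ [b]) <:+: w

/-- `y` is a right-extension of `w`. -/
def RightExt (w y : List α) : Prop :=
  ∃ (x : List α) (a : α), RightMaximal w x ∧ y = x ++ [a] ∧ y <:+: w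

/-- `y` is a supermaximal right-extension of `w`: a right-extension that is not a
proper suffix of any other right-extension. -/
def Supermaximal (w y : List α) : Prop :=
  RightExt w y ∧ ∀ z, RightExt w z → y <:+ z → z = y

/-- The number of supermaximal right-extensions of `w`. -/
noncomputable def sre (w : List α) : ℕ :=
  {y | Supermaximal w y}.ncard

/-! Every supermaximal right-extension of `w₁` is a right-extension of `w₂`, hence a suffix of
some supermaximal right-extension of `w₂`. Two suffixes of one string are suffix-comparable, so
supermaximality in `w₁` makes this assignment injective. -/

namespace RightExt

variable {w y : List α}

theorem isInfix (hy : RightExt w y) : y <:+: w := by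
  obtain ⟨_, _, _, _, hinf⟩ := hy
  exact hinf

theorem setOf_finite (w : List α) : {y | RightExt w y}.Finite :=
  (List.finite_toSet w.sublists).subset fun _ hy => List.mem_sublists.2 hy.isInfix.sublist

theorem exists_supermaximal_suffix (hy : RightExt w y) : ∃ z, Supermaximal w z ∧ y <:+ z := by
  have hfin : {z | RightExt w z ∧ y <:+ z}.Finite := (setOf_finite w).subset fun _ hz => hz.1
  obtain ⟨z, ⟨hz, hyz⟩, hmax⟩ := hfin.exists_maximalFor List.length _ ⟨y, hy, List.suffix_refl y⟩
  refine ⟨z, ⟨hz, fun z' hz' hzz' => ?_⟩, hyz⟩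
  have hlen := hmax ⟨hz', hyz.trans hzz'⟩ hzz'.length_le
  exact (hzz'.sublist.eq_of_length (le_antisymm hzz'.length_le hlen)).symm

end RightExt

theorem Supermaximal.setOf_finite (w : List α) : {y | Supermaximal w y}.Finite :=
  (RightExt.setOf_finite w).subset fun _ hy => hy.1

theorem Supermaximal.eq_of_suffix_of_suffix {w y y' z : List α} (hy : Supermaximal w y)
    (hy' : Supermaximal w y') (h : y <:+ z) (h' : y' <:+ z) : y = y' := by
  rcases List.suffix_or_suffix_of_suffix h h' with hs | hs
  · exact (hy.2 y' hy'.1 hs).symm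
  · exact hy'.2 y hy.1 hs

theorem sre_mono_of_rightExt_subset (w₁ w₂ : List α)
    (h : ∀ y, RightExt w₁ y → RightExt w₂ y) : sre w₁ ≤ sre w₂ := by
  choose! f hf hsuf using fun y (hy : Supermaximal w₁ y) =>
    (h y hy.1).exists_supermaximal_suffix
  exact Set.ncard_le_ncard_of_injOn f hf
    (fun y hy y' hy' hyy' => hy.eq_of_suffix_of_suffix hy' (hsuf y hy) (hyy' ▸ hsuf y' hy'))
    (Supermaximal.setOf_finite w₂)
end

section
/- For any string w and any symbol c, sre(w) ≤ sre(cw) ≤ sre(w) + 2, where cw denotes the string w with c prepended at the beginning. -/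
variable {α : Type*}

private lemma infix_cons_of_infix {u w : List α} (c : α) (h : u <:+: w) : u <:+: (c :: w) :=
  h.trans (List.suffix_cons c w).isInfix

private lemma rightExt_mono {w y : List α} {c : α} (h : RightExt w y) : RightExt (c :: w) y := by
  obtain ⟨x, a, ⟨p, q, hpq, hp, hq⟩, heq, hinf⟩ := h
  exact ⟨x, a, ⟨p, q, hpq, infix_cons_of_infix c hp, infix_cons_of_infix c hq⟩, heq,
    infix_cons_of_infix c hinf⟩

private lemma rightExt_infix {w y : List α} (h : RightExt w y) : y <:+: w := by
  obtain ⟨x, a, _, _, hinf⟩ := h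
  exact hinf

private lemma supermax_finite (v : List α) : {y | Supermaximal v y}.Finite := by
  apply Set.Finite.subset (v.sublists.finite_toSet)
  intro y hy
  exact List.mem_sublists.mpr (rightExt_infix hy.1).sublist

private lemma exists_supermax {v y : List α} (h : RightExt v y) :
    ∃ z, Supermaximal v z ∧ y <:+ z := by
  have key : ∀ n (y : List α), v.length - y.length ≤ n → RightExt v y →
      ∃ z, Supermaximal v z ∧ y <:+ z := by
    intro n
    induction n with
    | zero =>
      intro y hn hy
      refine ⟨y, ⟨hy, ?_⟩, List.suffix_rfl⟩
      intro z hz hsuf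
      have h1 : z.length ≤ v.length := (rightExt_infix hz).length_le
      have h2 : y.length ≤ v.length := (rightExt_infix hy).length_le
      have h3 : y.length ≤ z.length := hsuf.length_le
      exact (hsuf.sublist.eq_of_length (by omega)).symm
    | succ n ih =>
      intro y hn hy
      by_cases hsm : Supermaximal v y
      · exact ⟨y, hsm, List.suffix_rfl⟩
      · have hne : ¬ ∀ z, RightExt v z → y <:+ z → z = y := fun hb => hsm ⟨hy, hb⟩
        push_neg at hne
        obtain ⟨z, hz, hsuf, hzy⟩ := hne
        have hlt : y.length < z.length :=
          lt_of_le_of_ne hsuf.length_le (fun he => hzy (hsuf.sublist.eq_of_length he).symm)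
        obtain ⟨z', hz', hsuf'⟩ := ih z (by omega) hz
        exact ⟨z', hz', hsuf.trans hsuf'⟩
  exact key v.length y (Nat.sub_le _ _) h

private lemma prefix_eq_of_length {l p q : List α} (hp : p <+: l) (hq : q <+: l)
    (h : p.length = q.length) : p = q :=
  (List.prefix_of_prefix_length_le hp hq h.le).eq_of_length h

theorem sre_prepend (w : List α) (c : α) :
    sre w ≤ sre (c :: w) ∧ sre (c :: w) ≤ sre w + 2 := by
  classical
  constructor
  · -- lower bound
    apply Set.ncard_le_ncard_of_injOn
      (fun y => if h : RightExt (c :: w) y then (exists_supermax h).choose else [])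
      ?_ ?_ (supermax_finite (c :: w))
    · intro y hy
      have h : RightExt (c :: w) y := rightExt_mono hy.1
      simp only [dif_pos h]
      exact (exists_supermax h).choose_spec.1
    · intro y1 h1 y2 h2 heq
      have hr1 : RightExt (c :: w) y1 := rightExt_mono h1.1
      have hr2 : RightExt (c :: w) y2 := rightExt_mono h2.1
      simp only [dif_pos hr1, dif_pos hr2] at heq
      have hs1 : y1 <:+ (exists_supermax hr1).choose := (exists_supermax hr1).choose_spec.2
      have hs2 : y2 <:+ (exists_supermax hr1).choose := heq ▸ (exists_supermax hr2).choose_spec.2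
      rcases List.suffix_or_suffix_of_suffix hs1 hs2 with h | h
      · exact (h1.2 y2 h2.1 h).symm
      · exact h2.2 y1 h1.1 h
  · -- upper bound
    set S := {y | Supermaximal (c :: w) y} with hSdef
    set RE := {y : List α | RightExt w y} with hREdef
    have hS : S = (S ∩ RE) ∪ (S \ RE) := (Set.inter_union_diff _ _).symm
    have hA : (S ∩ RE).ncard ≤ sre w := by
      apply Set.ncard_le_ncard_of_injOn
        (fun y => if h : RightExt w y then (exists_supermax h).choose else [])
        ?_ ?_ (supermax_finite w)
      · intro y hy
        have h : RightExt w y := hy.2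
        simp only [dif_pos h]
        exact (exists_supermax h).choose_spec.1
      · intro y1 h1 y2 h2 heq
        have hr1 : RightExt w y1 := h1.2
        have hr2 : RightExt w y2 := h2.2
        simp only [dif_pos hr1, dif_pos hr2] at heq
        have hs1 : y1 <:+ (exists_supermax hr1).choose := (exists_supermax hr1).choose_spec.2
        have hs2 : y2 <:+ (exists_supermax hr1).choose := heq ▸ (exists_supermax hr2).choose_spec.2
        rcases List.suffix_or_suffix_of_suffix hs1 hs2 with h | h
        · exact (h1.1.2 y2 (rightExt_mono hr2) h).symm
        · exact h2.1.2 y1 (rightExt_mono hr1) h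
    -- the two "new" kinds of right-extensions
    set B1 : Set (List α) := {z | RightExt (c :: w) z ∧ z <+: (c :: w) ∧ ¬ z <:+: w} with hB1def
    set B2 : Set (List α) := {z | ∃ x a b, z = x ++ [b] ∧ (x ++ [a]) <+: (c :: w) ∧
      ¬ (x ++ [a]) <:+: w ∧ z <:+: w ∧ ∀ b', (x ++ [b']) <:+: w → b' = b} with hB2def
    have hBsub : S \ RE ⊆ B1 ∪ B2 := by
      rintro z ⟨hzS, hzRE⟩
      obtain ⟨x, a0, hxmax, hzeq, hinf⟩ := hzS.1
      by_cases hzw : z <:+: w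
      · -- Type 2
        right
        have hxw : ¬ RightMaximal w x := fun hm => hzRE ⟨x, a0, hm, hzeq, hzw⟩
        obtain ⟨a, b, hab, ha, hb⟩ := hxmax
        have huniq : ∀ b1 b2, (x ++ [b1]) <:+: w → (x ++ [b2]) <:+: w → b1 = b2 := by
          intro b1 b2 h1 h2
          by_contra hne
          exact hxw ⟨b1, b2, hne, h1, h2⟩
        -- one of x++[a], x++[b] is not an infix of w
        have hkey : ∃ a', ¬ (x ++ [a']) <:+: w ∧ (x ++ [a']) <+: (c :: w) := by
          by_cases haw : (x ++ [a]) <:+: w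
          · have hbw : ¬ (x ++ [b]) <:+: w := fun hbw => hab (huniq a b haw hbw)
            rcases List.infix_cons_iff.mp hb with hp | hi
            · exact ⟨b, hbw, hp⟩
            · exact absurd hi hbw
          · rcases List.infix_cons_iff.mp ha with hp | hi
            · exact ⟨a, haw, hp⟩
            · exact absurd hi haw
        obtain ⟨a', ha'w, ha'p⟩ := hkey
        refine ⟨x, a', a0, hzeq, ha'p, ha'w, hzw, ?_⟩
        intro b' hb'
        exact huniq b' a0 hb' (hzeq ▸ hzw)
      · -- Type 1
        left
        rcases List.infix_cons_iff.mp hinf with hp | hi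
        · exact ⟨hzS.1, hp, hzw⟩
        · exact absurd hi hzw
    have hB1 : Set.Subsingleton B1 := by
      have key : ∀ z1 z2, z1 ∈ B1 → z2 ∈ B1 → z1.length ≤ z2.length → z1 = z2 := by
        rintro z1 z2 ⟨hre1, hp1, hw1⟩ ⟨hre2, hp2, hw2⟩ hlen
        rcases eq_or_lt_of_le hlen with heq | hlt
        · exact prefix_eq_of_length hp1 hp2 heq
        · exfalso
          obtain ⟨x2, a2, ⟨p, q, hpq, hp', hq'⟩, hzeq2, _⟩ := hre2
          -- pick b ≠ a2 with x2 ++ [b] infix of c::w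
          have hb : ∃ b, b ≠ a2 ∧ (x2 ++ [b]) <:+: (c :: w) := by
            by_cases hpa : p = a2
            · subst hpa
              exact ⟨q, fun h => hpq h.symm, hq'⟩
            · exact ⟨p, hpa, hp'⟩
          obtain ⟨b, hba, hbinf⟩ := hb
          have hx2len : z1.length ≤ x2.length := by
            have : z2.length = x2.length + 1 := by simp [hzeq2]
            omega
          have hx2pre : x2 <+: (c :: w) := by
            have : x2 <+: z2 := hzeq2 ▸ List.prefix_append x2 [a2]
            exact this.trans hp2
          have hz1x2 : z1 <+: x2 := List.prefix_of_prefix_length_le hp1 hx2pre hx2len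
          have hz1xb : z1 <+: (x2 ++ [b]) := hz1x2.trans ⟨[b], rfl⟩
          rcases List.infix_cons_iff.mp hbinf with hpp | hii
          · -- x2 ++ [b] is a prefix of c::w, same length as z2
            have : x2 ++ [b] = z2 := by
              apply prefix_eq_of_length hpp (hzeq2 ▸ hp2)
              simp [hzeq2]
            rw [hzeq2] at this
            exact hba (by simpa using List.append_cancel_left this)
          · exact hw1 (hz1xb.isInfix.trans hii)
      intro z1 h1 z2 h2
      rcases le_total z1.length z2.length with h | h
      · exact key z1 z2 h1 h2 h
      · exact (key z2 z1 h2 h1 h).symm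
    have hB2 : Set.Subsingleton B2 := by
      have key : ∀ z1 z2 x1 x2 (a1 a2 b1 b2 : α),
          z1 = x1 ++ [b1] → (x1 ++ [a1]) <+: (c :: w) → ¬ (x1 ++ [a1]) <:+: w → z1 <:+: w →
          (∀ b', (x1 ++ [b']) <:+: w → b' = b1) →
          z2 = x2 ++ [b2] → (x2 ++ [a2]) <+: (c :: w) → ¬ (x2 ++ [a2]) <:+: w → z2 <:+: w →
          (∀ b', (x2 ++ [b']) <:+: w → b' = b2) →
          x1.length ≤ x2.length → z1 = z2 := by
        intro z1 z2 x1 x2 a1 a2 b1 b2 hz1 hp1 hn1 hw1 hu1 hz2 hp2 hn2 hw2 hu2 hlen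
        have hx1p : x1 <+: (c :: w) := (List.prefix_append x1 [a1]).trans hp1
        have hx2p : x2 <+: (c :: w) := (List.prefix_append x2 [a2]).trans hp2
        rcases eq_or_lt_of_le hlen with heq | hlt
        · have hxeq : x1 = x2 := prefix_eq_of_length hx1p hx2p heq
          subst hxeq
          have : b1 = b2 := hu2 b1 (hz1 ▸ hw1)
          rw [hz1, hz2, this]
        · exfalso
          have h1 : (x1 ++ [a1]) <+: x2 := by
            apply List.prefix_of_prefix_length_le hp1 hx2p
            simp; omega
          have h2 : (x1 ++ [a1]) <+: (x2 ++ [b2]) := h1.trans ⟨[b2], rfl⟩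
          exact hn1 (h2.isInfix.trans (hz2 ▸ hw2))
      rintro z1 ⟨x1, a1, b1, hz1, hp1, hn1, hw1, hu1⟩ z2 ⟨x2, a2, b2, hz2, hp2, hn2, hw2, hu2⟩
      rcases le_total x1.length x2.length with h | h
      · exact key z1 z2 x1 x2 a1 a2 b1 b2 hz1 hp1 hn1 hw1 hu1 hz2 hp2 hn2 hw2 hu2 h
      · exact (key z2 z1 x2 x1 a2 a1 b2 b1 hz2 hp2 hn2 hw2 hu2 hz1 hp1 hn1 hw1 hu1 h).symm
    have hBfin : (B1 ∪ B2).Finite := hB1.finite.union hB2.finite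
    have hBcard : (S \ RE).ncard ≤ 2 := by
      calc (S \ RE).ncard ≤ (B1 ∪ B2).ncard := Set.ncard_le_ncard hBsub hBfin
        _ ≤ B1.ncard + B2.ncard := Set.ncard_union_le _ _
        _ ≤ 1 + 1 := add_le_add ((Set.ncard_le_one hB1.finite).mpr fun a ha b hb => hB1 ha hb)
            ((Set.ncard_le_one hB2.finite).mpr fun a ha b hb => hB2 ha hb)
        _ = 2 := rfl
    calc sre (c :: w) = ((S ∩ RE) ∪ (S \ RE)).ncard := by rw [sre, ← hS]
      _ ≤ (S ∩ RE).ncard + (S \ RE).ncard := Set.ncard_union_le _ _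
      _ ≤ sre w + 2 := add_le_add hA hBcard
end

section
/- Let xa be a supermaximal right-extension of a string w. Then for every symbol b ≠ a, the set of symbols that precede an occurrence of xa in w is disjoint from the set of symbols that precede an occurrence of xb in w. -/
variable {α : Type*}

theorem supermaximal_left_ext_disjoint (w x : List α) (a b : α)
    (hsup : Supermaximal w (x ++ [a])) (hab : b ≠ a) :
    {c : α | (c :: (x ++ [a])) <:+: w} ∩ {c : α | (c :: (x ++ [b])) <:+: w} = ∅ := by
  ext c
  simp only [Set.mem_inter_iff, Set.mem_setOf_eq, Set.mem_empty_iff_false, iff_false, not_and]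
  intro h1 h2
  obtain ⟨_, hsup2⟩ := hsup
  have hre : RightExt w (c :: (x ++ [a])) :=
    ⟨c :: x, a, ⟨a, b, hab.symm, by simpa using h1, by simpa using h2⟩, by simp, by simpa using h1⟩
  have heq := hsup2 _ hre ⟨[c], rfl⟩
  have hlen : (c :: (x ++ [a])).length = (x ++ [a]).length := by rw [heq]
  simp at hlen
end

section
/- Let w be a string whose first symbol $ occurs nowhere else in w. If x is a right-maximal substring of w and xa is a supermaximal right-extension of w, then the reversal x^R is a right-maximal substring of the reversed string w^R. -/
variable {α : Type*}

/-! It suffices that `x` is left-maximal in `w`. An occurrence of `x a` that is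
not a prefix of `w` is preceded by some symbol; if the symbols preceding `x a'`, `x b'` and the
supermaximal `x a` all agreed, say with `c`, then `c x` would be right-maximal and `c x a` a
right-extension of which `x a` is a proper suffix. Since `$` occurs only at the start of `w`, the
only right-maximal `x` that is a prefix of `w` is the empty string. -/

def LeftMaximal (w x : List α) : Prop :=
  ∃ p q : α, p ≠ q ∧ p :: x <:+: w ∧ q :: x <:+: w

theorem LeftMaximal.rightMaximal_reverse {w x : List α} (h : LeftMaximal w x) :
    RightMaximal w.reverse x.reverse := by
  obtain ⟨p, q, hpq, hp, hq⟩ := h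
  exact ⟨p, q, hpq, by simpa using List.reverse_infix.mpr hp,
    by simpa using List.reverse_infix.mpr hq⟩

theorem List.exists_cons_infix_of_not_prefix {y w : List α} (h : y <:+: w) (hy : ¬ y <+: w) :
    ∃ c, c :: y <:+: w := by
  obtain ⟨t, u, rfl⟩ := h
  rcases t.eq_nil_or_concat with rfl | ⟨t', c, rfl⟩
  · exact absurd ⟨u, by simp⟩ hy
  · exact ⟨c, t', u, by simp⟩

theorem List.cons_infix_of_cons_concat_infix {c s : α} {x w : List α}
    (h : c :: (x ++ [s]) <:+: w) : c :: x <:+: w :=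
  (List.prefix_append (c :: x) [s]).isInfix.trans (by simpa using h)

theorem Supermaximal.not_rightMaximal_cons {w x : List α} {a c : α}
    (hsup : Supermaximal w (x ++ [a])) (hc : c :: (x ++ [a]) <:+: w) :
    ¬ RightMaximal w (c :: x) := by
  intro hrm
  have hext : RightExt w (c :: (x ++ [a])) := ⟨c :: x, a, hrm, rfl, hc⟩
  have := congrArg List.length (hsup.2 _ hext (List.suffix_cons c _))
  simp at this

theorem Supermaximal.leftMaximal {w x : List α} {a : α} (hx : RightMaximal w x)
    (hsup : Supermaximal w (x ++ [a])) (hpre : ¬ x <+: w) : LeftMaximal w x := by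
  have preceded : ∀ s, x ++ [s] <:+: w → ∃ c, c :: (x ++ [s]) <:+: w := fun s hs =>
    List.exists_cons_infix_of_not_prefix hs fun h => hpre ((List.prefix_append x [s]).trans h)
  obtain ⟨a', b', hab, ha', hb'⟩ := hx
  obtain ⟨c, hc⟩ := preceded a' ha'
  obtain ⟨e, he⟩ := preceded b' hb'
  obtain ⟨_, _, _, _, hxa⟩ := hsup.1
  obtain ⟨f, hf⟩ := preceded a hxa
  by_cases hce : c = e
  · subst hce
    have hfc : f ≠ c := by
      rintro rfl
      exact hsup.not_rightMaximal_cons hf ⟨a', b', hab, by simpa using hc, by simpa using he⟩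
    exact ⟨f, c, hfc, List.cons_infix_of_cons_concat_infix hf,
      List.cons_infix_of_cons_concat_infix hc⟩
  · exact ⟨c, e, hce, List.cons_infix_of_cons_concat_infix hc,
      List.cons_infix_of_cons_concat_infix he⟩

theorem List.cons_prefix_of_cons_infix_of_notMem {d : α} {y v : List α} (hd : d ∉ v)
    (h : d :: y <:+: d :: v) : d :: y <+: d :: v :=
  (List.infix_cons_iff.mp h).resolve_right fun hv => hd (hv.subset List.mem_cons_self)

theorem not_rightMaximal_cons_of_notMem {d : α} {y v : List α} (hd : d ∉ v) :
    ¬ RightMaximal (d :: v) (d :: y) := by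
  rintro ⟨a, b, hab, ha, hb⟩
  have ha' := List.cons_prefix_of_cons_infix_of_notMem hd ha
  have hb' := List.cons_prefix_of_cons_infix_of_notMem hd hb
  have := List.prefix_of_prefix_length_le ha' hb' (by simp)
  exact hab (by simpa using this.eq_of_length (by simp))

theorem reverse_rightMaximal (v x : List α) (dollar : α) (hd : dollar ∉ v)
    (a : α) (hx : RightMaximal (dollar :: v) x)
    (hsup : Supermaximal (dollar :: v) (x ++ [a])) :
    RightMaximal (dollar :: v).reverse x.reverse := by
  apply LeftMaximal.rightMaximal_reverse
  by_cases hpre : x <+: dollar :: v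
  · rcases x with _ | ⟨c, y⟩
    · exact hx -- for the empty string, left- and right-maximality coincide
    · obtain rfl : c = dollar := (List.cons_prefix_cons.mp hpre).1
      exact absurd hx (not_rightMaximal_cons_of_notMem hd)
  · exact hsup.leftMaximal hx hpre
end

section
/- For every binary de Bruijn sequence w of order k, sre(w) = 2^k. In particular, sre(w) = Ω(n) where n = 2^k + k − 1 is the length of w. -/
variable {α : Type*}

/-- A binary de Bruijn sequence of order `k`: length `2^k + (k-1)` and every
binary string of length `k` occurs as a substring exactly once. -/
def IsDeBruijn (k : ℕ) (w : List Bool) : Prop :=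
  w.length = 2 ^ k + (k - 1) ∧
  ∀ x : List Bool, x.length = k →
    ∃! i : ℕ, i + k ≤ w.length ∧ x = (w.drop i).take k

/-!
In a de Bruijn sequence of order `k` every word of length at most `k` occurs (it is a suffix of
a word of length `k`), while a word of length at least `k` occurs at most once and so has at most
one right extension. Hence the right-maximal words are exactly those of length `< k`, the
right-extensions those of length `1, …, k`, and the supermaximal ones those of length exactly `k`,
of which there are `2^k`.
-/

theorem List.take_drop_infix (w : List α) (i n : ℕ) : (w.drop i).take n <:+: w :=
  (List.take_prefix _ _).isInfix.trans (List.drop_suffix _ _).isInfix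

theorem List.infix_iff_exists_eq_take_drop {u w : List α} :
    u <:+: w ↔ ∃ i, i + u.length ≤ w.length ∧ u = (w.drop i).take u.length := by
  constructor
  · rintro ⟨s, t, rfl⟩
    refine ⟨s.length, by simp, ?_⟩
    rw [List.append_assoc, List.drop_left, List.take_left]
  · rintro ⟨i, -, hi⟩
    exact hi ▸ List.take_drop_infix w i _

theorem Set.ncard_setOf_length_eq [Fintype α] (k : ℕ) :
    {y : List α | y.length = k}.ncard = Fintype.card α ^ k := by
  rw [← Nat.card_coe_set_eq]
  change Nat.card (List.Vector α k) = _
  simp [card_vector]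

namespace IsDeBruijn

variable {k : ℕ} {w : List Bool}

theorem eq_of_take_drop_eq (hw : IsDeBruijn k w) {i j : ℕ} (hi : i + k ≤ w.length)
    (hj : j + k ≤ w.length) (h : (w.drop i).take k = (w.drop j).take k) : i = j := by
  obtain ⟨_, -, huniq⟩ := hw.2 ((w.drop i).take k) (by simp; omega)
  exact (huniq i ⟨hi, rfl⟩).trans (huniq j ⟨hj, h⟩).symm

theorem infix_of_length_le (hw : IsDeBruijn k w) {x : List Bool} (hx : x.length ≤ k) :
    x <:+: w := by
  obtain ⟨i, ⟨-, hi⟩, -⟩ := hw.2 (List.replicate (k - x.length) true ++ x) (by simp; omega)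
  exact (List.suffix_append _ _).isInfix.trans (hi ▸ List.take_drop_infix w i k)

theorem length_lt_of_rightMaximal (hw : IsDeBruijn k w) {x : List Bool}
    (hx : RightMaximal w x) : x.length < k := by
  obtain ⟨a, b, hab, ha, hb⟩ := hx
  by_contra! hkx
  obtain ⟨i, hi, hia⟩ := List.infix_iff_exists_eq_take_drop.1 ha
  obtain ⟨j, hj, hjb⟩ := List.infix_iff_exists_eq_take_drop.1 hb
  simp only [List.length_append, List.length_singleton] at hi hj hia hjb
  have take_k {c : Bool} {m : ℕ} (hm : x ++ [c] = (w.drop m).take (x.length + 1)) :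
      x.take k = (w.drop m).take k := by
    rw [← List.take_append_of_le_length hkx, hm, List.take_take, min_eq_left (by omega)]
  obtain rfl : i = j :=
    hw.eq_of_take_drop_eq (by omega) (by omega) ((take_k hia).symm.trans (take_k hjb))
  exact hab (by simpa using hia.trans hjb.symm)

theorem rightExt_iff (hw : IsDeBruijn k w) {y : List Bool} :
    RightExt w y ↔ y ≠ [] ∧ y.length ≤ k := by
  constructor
  · rintro ⟨x, a, hx, rfl, -⟩
    simpa [Nat.succ_le_iff] using hw.length_lt_of_rightMaximal hx
  · rintro ⟨hne, hy⟩
    have hlast (c : Bool) : y.dropLast ++ [c] <:+: w := by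
      have := List.length_pos_of_ne_nil hne
      exact hw.infix_of_length_le (by simp; omega)
    exact ⟨y.dropLast, y.getLast hne, ⟨true, false, by decide, hlast true,
      hlast false⟩, (List.dropLast_append_getLast hne).symm, hw.infix_of_length_le hy⟩

theorem supermaximal_iff (hw : IsDeBruijn k w) (hk : 0 < k) {y : List Bool} :
    Supermaximal w y ↔ y.length = k := by
  constructor
  · rintro ⟨hy, hmax⟩
    obtain ⟨hne, hyk⟩ := hw.rightExt_iff.1 hy
    let z := List.replicate (k - y.length) true ++ y
    have hz : z.length = k := by simp [z]; omega
    have hzy := hmax z (hw.rightExt_iff.2 ⟨by simp [z, hne], hz.le⟩) (List.suffix_append _ _)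
    rw [← hz, hzy]
  · intro hy
    refine ⟨hw.rightExt_iff.2 ⟨List.ne_nil_of_length_pos (hy ▸ hk), hy.le⟩, fun z hz hyz => ?_⟩
    exact (hyz.eq_of_length (le_antisymm hyz.length_le (hy ▸ (hw.rightExt_iff.1 hz).2))).symm

end IsDeBruijn

theorem sre_deBruijn (k : ℕ) (hk : 0 < k) (w : List Bool) (hw : IsDeBruijn k w) :
    sre w = 2 ^ k ∧ w.length ≤ 2 * sre w := by
  have hsre : sre w = 2 ^ k := by
    simp only [sre, hw.supermaximal_iff hk, Set.ncard_setOf_length_eq, Fintype.card_bool]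
  refine ⟨hsre, ?_⟩
  rw [hsre, hw.1]
  have := Nat.lt_two_pow_self (n := k)
  omega
end

section
/- Let F_1 = b, F_2 = a, F_k = F_{k−1}F_{k−2} be the Fibonacci words. For k ≥ 3 one can write F_{k−1}F_{k−2} = H_k·cd and F_{k−2}F_{k−1} = H_k·dc for some string H_k and distinct symbols c,d ∈ {a,b} (depending on the parity of k); that is, F_{k−1}F_{k−2} and F_{k−2}F_{k−1} differ exactly in their last two positions, which are swapped. -/
variable {α : Type*}

/-- Fibonacci words over the alphabet {a, b} encoded as {0, 1} (a = 0, b = 1). -/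
def fibWord : ℕ → List ℕ
  | 0 => []
  | 1 => [1]
  | 2 => [0]
  | n + 3 => fibWord (n + 2) ++ fibWord (n + 1)

lemma fib_aux (n : ℕ) :
    ∃ (H : List ℕ) (c d : ℕ), c ≠ d ∧ c ∈ ({0, 1} : Set ℕ) ∧ d ∈ ({0, 1} : Set ℕ) ∧
      fibWord (n + 2) ++ fibWord (n + 1) = H ++ [c, d] ∧
      fibWord (n + 1) ++ fibWord (n + 2) = H ++ [d, c] := by
  induction n with
  | zero =>
      exact ⟨[], 0, 1, by decide, by simp, by simp, by decide, by decide⟩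
  | succ m ih =>
      obtain ⟨H, c, d, hcd, hc, hd, h1, h2⟩ := ih
      refine ⟨fibWord (m + 2) ++ H, d, c, hcd.symm, hd, hc, ?_, ?_⟩
      · show (fibWord (m + 2) ++ fibWord (m + 1)) ++ fibWord (m + 2) = _
        rw [List.append_assoc, h2, ← List.append_assoc]
      · show fibWord (m + 2) ++ (fibWord (m + 2) ++ fibWord (m + 1)) = _
        rw [h1, ← List.append_assoc]

theorem fib_swap_last_two (k : ℕ) (hk : 3 ≤ k) :
    ∃ (H : List ℕ) (c d : ℕ), c ≠ d ∧ c ∈ ({0, 1} : Set ℕ) ∧ d ∈ ({0, 1} : Set ℕ) ∧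
      fibWord (k - 1) ++ fibWord (k - 2) = H ++ [c, d] ∧
      fibWord (k - 2) ++ fibWord (k - 1) = H ++ [d, c] := by
  obtain ⟨m, rfl⟩ : ∃ m, k = m + 3 := ⟨k - 3, by omega⟩
  have := fib_aux m
  simpa using this
end

section
/- For every Fibonacci word F_k with k ≥ 2, χ(F_k) ≤ 4; that is, the string F_k$ has a suffixient set of size at most 4. -/
variable {α : Type*}

/-- `S` is a suffixient set for `w` (positions are 1-indexed). -/
def Suffixient (w : List α) (S : Finset ℕ) : Prop :=
  (∀ j ∈ S, 1 ≤ j ∧ j ≤ w.length) ∧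
  ∀ y, RightExt w y → ∃ j ∈ S, y <:+ w.take j

/-!
`F (n + 1) = φ (F n)` for the Fibonacci morphism `φ : 0 ↦ 01, 1 ↦ 0`, and an occurrence of a word
in a `φ`-image can be desubstituted to an occurrence in the preimage. By desubstitution,

* every right-special factor of `F k` is a suffix of the central word of `F (k - 1)` (that word
  minus its last two letters), so its right extensions end at position `|F (k - 1)| - 1` or
  `|F k| - 1`;
* the suffix of `F k` of length `|F (k - 2)| + 1` occurs in `F k` only once, so a suffix of `F k`
  that is followed by a letter elsewhere is a suffix of `F (k - 2)`, and `F (k - 2) 0` is a prefix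
  of `F k`.

Together with the extensions by `$`, which are suffixes of `F k $`, the positions
`|F (k - 2)| + 1, |F (k - 1)| - 1, |F k| - 1, |F k| + 1` form a suffixient set when `k ≥ 5`; for
smaller `k` the word `F k $` has at most four positions. Any suffixient set bounds `sre`, since two
supermaximal right-extensions cannot be suffixes of the same prefix.
-/
theorem Suffixient.sre_le_card {w : List α} {S : Finset ℕ} (h : Suffixient w S) :
    sre w ≤ S.card := by
  classical
  rw [sre, ← Set.ncard_coe_finset]
  choose! f hfS hf using fun y (hy : Supermaximal w y) => h.2 y hy.1
  refine Set.ncard_le_ncard_of_injOn f hfS (fun y₁ h₁ y₂ h₂ hf₁₂ => ?_) S.finite_toSet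
  rcases List.suffix_or_suffix_of_suffix (hf y₁ h₁) (hf₁₂ ▸ hf y₂ h₂) with h₁₂ | h₂₁
  · exact (h₁.2 y₂ h₂.1 h₁₂).symm
  · exact h₂.2 y₁ h₁.1 h₂₁

lemma suffixient_Icc (w : List α) : Suffixient w (Finset.Icc 1 w.length) := by
  refine ⟨fun j hj => Finset.mem_Icc.1 hj, ?_⟩
  rintro y ⟨x, a, -, rfl, s, t, rfl⟩
  refine ⟨(s ++ (x ++ [a])).length, Finset.mem_Icc.2 ⟨by simp; omega, by simp⟩, ?_⟩
  rw [List.take_left]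
  exact List.suffix_append _ _

lemma Suffixient.of_prefixes {w : List α} {P : List (List α)} (hP : ∀ p ∈ P, p ≠ [] ∧ p <+: w)
    (h : ∀ y, RightExt w y → ∃ p ∈ P, y <:+ p) : Suffixient w (P.map List.length).toFinset := by
  refine ⟨fun j hj => ?_, fun y hy => ?_⟩
  · obtain ⟨p, hp, rfl⟩ := List.mem_map.1 (List.mem_toFinset.1 hj)
    exact ⟨List.length_pos_of_ne_nil (hP p hp).1, (hP p hp).2.length_le⟩
  · obtain ⟨p, hp, hyp⟩ := h y hy
    refine ⟨p.length, List.mem_toFinset.2 (List.mem_map_of_mem hp), ?_⟩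
    rwa [← List.prefix_iff_eq_take.1 (hP p hp).2]

lemma append_singleton_infix_append_singleton {x u : List α} {d e : α}
    (h : x ++ [d] <:+: u ++ [e]) : x ++ [d] <:+: u ∨ d = e ∧ x <:+ u := by
  rcases List.infix_concat_iff.1 h with ⟨s, hs⟩ | h
  · obtain ⟨h₁, h₂⟩ := List.append_inj' (by simpa using hs : (s ++ x) ++ [d] = u ++ [e]) rfl
    exact Or.inr ⟨by simpa using h₂, s, h₁⟩
  · exact Or.inl h

lemma eq_singleton_of_prefix_singleton {y : List α} {a : α} (h : y <+: [a]) (hy : y ≠ []) :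
    y = [a] :=
  h.eq_of_length (le_antisymm h.length_le (List.length_pos_of_ne_nil hy))

namespace FibonacciWord

def phi (w : List ℕ) : List ℕ := w.flatMap fun c => if c = 0 then [0, 1] else [0]

@[simp] lemma phi_nil : phi [] = [] := rfl

@[simp] lemma phi_append (u v : List ℕ) : phi (u ++ v) = phi u ++ phi v := List.flatMap_append

@[simp] lemma phi_cons_zero (u : List ℕ) : phi (0 :: u) = 0 :: 1 :: phi u := rfl

lemma phi_cons_of_ne_zero {a : ℕ} (ha : a ≠ 0) (u : List ℕ) : phi (a :: u) = 0 :: phi u := by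
  simp [phi, ha]

@[simp] lemma phi_singleton_one : phi [1] = [0] := rfl

lemma phi_subset (u : List ℕ) : phi u ⊆ [0, 1] := by
  intro c hc
  simp only [phi, List.mem_flatMap] at hc
  obtain ⟨a, -, hc⟩ := hc
  split at hc <;> simp_all

lemma phi_suffix_phi {y z : List ℕ} (h : y <:+ z) : phi y <:+ phi z := by
  obtain ⟨s, rfl⟩ := h
  exact ⟨phi s, (phi_append s y).symm⟩

lemma exists_phi_eq_zero_cons {u : List ℕ} (hu : u ≠ []) : ∃ r, phi u = 0 :: r := by
  obtain _ | ⟨a, u⟩ := u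
  · exact absurd rfl hu
  · by_cases ha : a = 0
    · exact ⟨1 :: phi u, by rw [ha, phi_cons_zero]⟩
    · exact ⟨_, phi_cons_of_ne_zero ha u⟩

lemma phi_append_zero_cons (v t : List ℕ) : ∃ r, phi v ++ 0 :: t = 0 :: r := by
  rcases eq_or_ne v [] with rfl | hv
  · exact ⟨t, rfl⟩
  · obtain ⟨r, hr⟩ := exists_phi_eq_zero_cons hv
    exact ⟨r ++ 0 :: t, by simp [hr]⟩

lemma phi_ne_one_cons (u r : List ℕ) : phi u ≠ 1 :: r := by
  rcases eq_or_ne u [] with rfl | hu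
  · simp
  · obtain ⟨r', hr'⟩ := exists_phi_eq_zero_cons hu
    simp [hr']

lemma phi_injective {v w : List ℕ} (hv : v ⊆ [0, 1]) (hw : w ⊆ [0, 1]) (h : phi v = phi w) :
    v = w := by
  induction v generalizing w with
  | nil =>
    rcases eq_or_ne w [] with rfl | hw'
    · rfl
    · obtain ⟨r, hr⟩ := exists_phi_eq_zero_cons hw'
      simp [hr] at h
  | cons a v ih =>
    obtain _ | ⟨b, w⟩ := w
    · obtain ⟨r, hr⟩ := exists_phi_eq_zero_cons (List.cons_ne_nil a v)
      simp [hr] at h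
    simp only [List.cons_subset, List.mem_cons, List.not_mem_nil, or_false] at hv hw
    obtain ⟨ha | ha, hv⟩ := hv <;> obtain ⟨hb | hb, hw⟩ := hw <;> subst ha hb
    · simp only [phi_cons_zero, List.cons.injEq, true_and] at h
      rw [ih hv hw h]
    · rw [phi_cons_zero, phi_cons_of_ne_zero one_ne_zero, List.cons.injEq] at h
      exact absurd h.2.symm (phi_ne_one_cons _ _)
    · rw [phi_cons_zero, phi_cons_of_ne_zero one_ne_zero, List.cons.injEq] at h
      exact absurd h.2 (phi_ne_one_cons _ _)
    · rw [phi_cons_of_ne_zero one_ne_zero, phi_cons_of_ne_zero one_ne_zero, List.cons.injEq] at h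
      rw [ih hv hw h.2]

lemma phi_one_preceded_by_zero {u s r : List ℕ} (h : s ++ 1 :: r = phi u) :
    ∃ s', s = s' ++ [0] := by
  induction u generalizing s with
  | nil => simp at h
  | cons b u ih =>
    obtain _ | ⟨c, s⟩ := s
    · rcases eq_or_ne b 0 with rfl | hb
      · simp at h
      · simp [phi_cons_of_ne_zero hb] at h
    rcases eq_or_ne b 0 with rfl | hb
    · obtain _ | ⟨d, s⟩ := s
      · exact ⟨[], by simp_all⟩
      · simp only [List.cons_append, phi_cons_zero, List.cons.injEq] at h
        obtain ⟨rfl, rfl, h⟩ := h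
        obtain ⟨s', rfl⟩ := ih h
        exact ⟨0 :: 1 :: s', rfl⟩
    · simp only [List.cons_append, phi_cons_of_ne_zero hb, List.cons.injEq] at h
      obtain ⟨rfl, h⟩ := h
      obtain ⟨s', rfl⟩ := ih h
      exact ⟨0 :: s', rfl⟩

lemma zero_cons_infix_phi {z u : List ℕ} (h : 1 :: z <:+: phi u) : 0 :: 1 :: z <:+: phi u := by
  obtain ⟨s, t, hst⟩ := h
  obtain ⟨s', rfl⟩ := phi_one_preceded_by_zero (u := u) (s := s) (r := z ++ t) (by simpa using hst)
  exact ⟨s', t, by simpa using hst⟩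

lemma not_one_one_infix_phi (u : List ℕ) : ¬ [1, 1] <:+: phi u := by
  rintro ⟨s, t, h⟩
  obtain ⟨s', hs⟩ := phi_one_preceded_by_zero (u := u) (s := s ++ [1]) (r := t) (by simpa using h)
  simpa using congrArg List.getLast? hs

lemma exists_prefix_of_prefix_phi {z w : List ℕ} (h : z <+: phi w) :
    ∃ y, y <+: w ∧ (phi y = z ∨ phi y = z ++ [1]) := by
  induction w generalizing z with
  | nil => exact ⟨[], List.nil_prefix, Or.inl (List.prefix_nil.1 h).symm⟩
  | cons b w ih =>
    obtain _ | ⟨c, z⟩ := z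
    · exact ⟨[], List.nil_prefix, Or.inl rfl⟩
    rcases eq_or_ne b 0 with rfl | hb
    · rw [phi_cons_zero, List.cons_prefix_cons] at h
      obtain ⟨rfl, h⟩ := h
      obtain _ | ⟨d, z⟩ := z
      · exact ⟨[0], by simp, Or.inr rfl⟩
      rw [List.cons_prefix_cons] at h
      obtain ⟨rfl, h⟩ := h
      obtain ⟨y, hy, hyz⟩ := ih h
      exact ⟨0 :: y, by simpa using hy, by simpa using hyz⟩
    · rw [phi_cons_of_ne_zero hb, List.cons_prefix_cons] at h
      obtain ⟨rfl, h⟩ := h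
      obtain ⟨y, hy, hyz⟩ := ih h
      exact ⟨b :: y, by simpa using hy, by simpa [phi_cons_of_ne_zero hb] using hyz⟩

lemma exists_eq_phi_of_append_zero_prefix_phi {s u : List ℕ} (h : s ++ [0] <+: phi u) :
    ∃ u₁ u₂, u = u₁ ++ u₂ ∧ s = phi u₁ := by
  obtain ⟨y, ⟨u₂, rfl⟩, hy | hy⟩ :=
    exists_prefix_of_prefix_phi ((List.prefix_append s [0]).trans h)
  · exact ⟨y, u₂, rfl, hy.symm⟩
  · have h1 : s ++ [1] <+: phi (y ++ u₂) := by
      rw [phi_append, hy]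
      exact List.prefix_append _ _
    simpa using List.prefix_of_prefix_length_le h1 h (by simp)

lemma exists_append_prefix_of_phi_append_prefix {v t w : List ℕ} (hv : v ⊆ [0, 1])
    (hw : w ⊆ [0, 1]) (h : phi v ++ 0 :: t <+: phi w) :
    ∃ y, v ++ y <+: w ∧ (phi y = 0 :: t ∨ phi y = 0 :: t ++ [1]) := by
  obtain ⟨w₁, w₂, rfl, hw₁⟩ :=
    exists_eq_phi_of_append_zero_prefix_phi
      ((List.prefix_append (phi v ++ [0]) t).trans (by simpa using h))
  obtain rfl := phi_injective hv (List.append_subset.1 hw).1 hw₁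
  rw [phi_append, List.prefix_append_right_inj] at h
  obtain ⟨y, hy, hyt⟩ := exists_prefix_of_prefix_phi h
  exact ⟨y, (List.prefix_append_right_inj v).2 hy, hyt⟩

lemma exists_append_infix_of_phi_append_infix {v t u : List ℕ} (hv : v ⊆ [0, 1])
    (hu : u ⊆ [0, 1]) (h : phi v ++ 0 :: t <:+: phi u) :
    ∃ y, v ++ y <:+: u ∧ (phi y = 0 :: t ∨ phi y = 0 :: t ++ [1]) := by
  obtain ⟨s, r, hsr⟩ := h
  obtain ⟨z, hz⟩ := phi_append_zero_cons v t
  obtain ⟨u₁, u₂, rfl, rfl⟩ :=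
    exists_eq_phi_of_append_zero_prefix_phi (s := s) (u := u) ⟨z ++ r, by simp [← hsr, hz]⟩
  rw [phi_append, List.append_assoc, List.append_cancel_left_eq] at hsr
  obtain ⟨y, hy, hyt⟩ :=
    exists_append_prefix_of_phi_append_prefix hv (List.append_subset.1 hu).2 ⟨r, hsr⟩
  exact ⟨y, hy.isInfix.trans (List.suffix_append u₁ u₂).isInfix, hyt⟩

lemma exists_append_singleton_infix_of_phi_append_zero_infix {v u : List ℕ} (hv : v ⊆ [0, 1])
    (hu : u ⊆ [0, 1]) (h : phi v ++ [0] <:+: phi u) : ∃ d, v ++ [d] <:+: u := by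
  obtain ⟨_ | ⟨d, y⟩, hy, hphi⟩ := exists_append_infix_of_phi_append_infix (t := []) hv hu h
  · simp at hphi
  · exact ⟨d, (List.prefix_append (v ++ [d]) y).isInfix.trans (by simpa using hy)⟩

lemma exists_of_zero_cons_append_one_infix_phi {z u : List ℕ} (hu : u ⊆ [0, 1])
    (h : (0 :: z) ++ [1] <:+: phi u) : ∃ y, y ++ [0] <:+: u ∧ phi y ++ [0] = 0 :: z := by
  obtain ⟨y₀, hy₀, hphi | hphi⟩ :=
    exists_append_infix_of_phi_append_infix (v := []) (t := z ++ [1]) (List.nil_subset _) hu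
      (by simpa using h)
  · obtain rfl | ⟨y, a, rfl⟩ := List.eq_nil_or_concat' y₀
    · simp at hphi
    rcases eq_or_ne a 0 with rfl | ha
    · refine ⟨y, by simpa using hy₀, List.append_cancel_right (bs := [1]) ?_⟩
      simpa using hphi
    · have : phi y ++ [0] = (0 :: z) ++ [1] := by simpa [phi_cons_of_ne_zero ha] using hphi
      have := congrArg List.getLast? this
      rw [List.getLast?_concat, List.getLast?_concat] at this
      simp at this
  · exact absurd ⟨0 :: z, [], by simp [hphi]⟩ (not_one_one_infix_phi y₀)

/-- `RightMaximal w x` for words `w` over `{0, 1}`. -/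
def RightSpecial (w x : List ℕ) : Prop := x ++ [0] <:+: w ∧ x ++ [1] <:+: w

lemma RightSpecial.exists_of_phi_zero_cons {u x : List ℕ} (hu : u ⊆ [0, 1])
    (h : RightSpecial (phi u) (0 :: x)) : ∃ y, RightSpecial u y ∧ 0 :: x = phi y ++ [0] := by
  obtain ⟨y, hy0, hx⟩ := exists_of_zero_cons_append_one_infix_phi hu h.2
  have hy : y ⊆ [0, 1] := fun a ha => hu (hy0.subset (List.mem_append_left _ ha))
  have h1 : phi (y ++ [1]) ++ [0] <:+: phi u := by simpa [← hx] using h.1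
  obtain ⟨d, hd⟩ := exists_append_singleton_infix_of_phi_append_zero_infix
    (List.append_subset.2 ⟨hy, by simp⟩) hu h1
  exact ⟨y, ⟨hy0, (List.prefix_append _ [d]).isInfix.trans hd⟩, hx.symm⟩

lemma RightSpecial.exists_of_phi {u x : List ℕ} (hu : u ⊆ [0, 1])
    (h : RightSpecial (phi u) x) (hx : x ≠ []) : ∃ y, RightSpecial u y ∧ x <:+ phi y ++ [0] := by
  obtain ⟨a, x, rfl⟩ := List.exists_cons_of_ne_nil hx
  have ha : a = 0 ∨ a = 1 := by simpa using phi_subset u (h.1.subset (by simp))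
  obtain rfl | rfl := ha
  · obtain ⟨y, hy, hxy⟩ := h.exists_of_phi_zero_cons hu
    exact ⟨y, hy, hxy ▸ List.suffix_refl _⟩
  · obtain ⟨y, hy, hxy⟩ := RightSpecial.exists_of_phi_zero_cons (x := 1 :: x) hu
      ⟨zero_cons_infix_phi h.1, zero_cons_infix_phi h.2⟩
    exact ⟨y, hy, hxy ▸ List.suffix_cons _ _⟩

lemma fibWord_add_three (n : ℕ) : fibWord (n + 3) = fibWord (n + 2) ++ fibWord (n + 1) := rfl

lemma phi_fibWord : ∀ n, phi (fibWord (n + 1)) = fibWord (n + 2)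
  | 0 => rfl
  | 1 => rfl
  | n + 2 => by rw [fibWord_add_three, phi_append, phi_fibWord (n + 1), phi_fibWord n]; rfl

lemma fibWord_subset : ∀ n, fibWord n ⊆ [0, 1]
  | 0 => List.nil_subset _
  | 1 => by simp [fibWord]
  | 2 => by simp [fibWord]
  | n + 3 => List.append_subset.2 ⟨fibWord_subset (n + 2), fibWord_subset (n + 1)⟩

lemma zero_prefix_fibWord : ∀ n, [0] <+: fibWord (n + 2)
  | 0 => List.prefix_refl _
  | n + 1 => (zero_prefix_fibWord n).trans (List.prefix_append _ _)

lemma suffix_fibWord : ∀ n, [n % 2, (n + 1) % 2] <:+ fibWord (n + 3)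
  | 0 => List.suffix_refl _
  | 1 => ⟨[0], rfl⟩
  | n + 2 => by
    rw [show (n + 2 + 1) % 2 = (n + 1) % 2 by omega, Nat.add_mod_right]
    exact (suffix_fibWord n).trans (List.suffix_append _ _)

/-- The central word of the standard word `fibWord n`. -/
def centralWord (n : ℕ) : List ℕ := (fibWord n).dropLast.dropLast

lemma fibWord_eq_centralWord_append (n : ℕ) :
    fibWord (n + 3) = centralWord (n + 3) ++ [n % 2, (n + 1) % 2] := by
  obtain ⟨s, hs⟩ := suffix_fibWord n
  have hs' : fibWord (n + 3) = s ++ [n % 2] ++ [(n + 1) % 2] := by simp [← hs]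
  rw [centralWord, hs', List.dropLast_concat, List.dropLast_concat]
  simp

lemma centralWord_subset (n : ℕ) : centralWord (n + 3) ⊆ [0, 1] := fun _ ha =>
  fibWord_subset (n + 3) (fibWord_eq_centralWord_append n ▸ List.mem_append_left _ ha)

lemma dropLast_fibWord (n : ℕ) : (fibWord (n + 3)).dropLast = centralWord (n + 3) ++ [n % 2] := by
  rw [fibWord_eq_centralWord_append, show centralWord (n + 3) ++ [n % 2, (n + 1) % 2] =
    centralWord (n + 3) ++ [n % 2] ++ [(n + 1) % 2] by simp, List.dropLast_concat]

lemma phi_centralWord (n : ℕ) : phi (centralWord (n + 3)) ++ [0] = centralWord (n + 4) := by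
  have h := fibWord_eq_centralWord_append (n + 1)
  rw [← phi_fibWord, fibWord_eq_centralWord_append, phi_append] at h
  apply List.append_cancel_right (bs := [(n + 1) % 2, (n + 1 + 1) % 2])
  rw [← h]
  rcases Nat.mod_two_eq_zero_or_one n with hn | hn
  · simp [hn, phi, show (n + 1) % 2 = 1 by omega, show (n + 1 + 1) % 2 = 0 by omega]
  · simp [hn, phi, show (n + 1) % 2 = 0 by omega, show (n + 1 + 1) % 2 = 1 by omega]

lemma centralWord_suffix : ∀ n, centralWord (n + 3) <:+ centralWord (n + 4)
  | 0 => List.nil_suffix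
  | n + 1 => by
    rw [← phi_centralWord, ← phi_centralWord]
    exact List.suffix_append_self_iff.2 (phi_suffix_phi (centralWord_suffix n))

theorem RightSpecial.suffix_centralWord {x : List ℕ} :
    ∀ {n}, RightSpecial (fibWord (n + 4)) x → x <:+ centralWord (n + 3)
  | 0, h => by
    have hx : x ∈ ([0, 1, 0] : List ℕ).sublists :=
      List.mem_sublists.2 ((List.sublist_append_left x [0]).trans h.1.sublist)
    have key : ∀ x ∈ ([0, 1, 0] : List ℕ).sublists,
        x ++ [0] <:+: [0, 1, 0] → x ++ [1] <:+: [0, 1, 0] → x = [] := by decide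
    exact key x hx h.1 h.2 ▸ List.nil_suffix
  | n + 1, h => by
    rcases eq_or_ne x [] with rfl | hx
    · exact List.nil_suffix
    rw [← phi_fibWord] at h
    obtain ⟨y, hy, hxy⟩ := h.exists_of_phi (fibWord_subset _) hx
    rw [← phi_centralWord]
    exact hxy.trans (List.suffix_append_self_iff.2 (phi_suffix_phi hy.suffix_centralWord))

lemma prefix_one_of_phi_infix_phi {g u : List ℕ} (hg : g ⊆ [0, 1]) (hu : u ⊆ [0, 1])
    (H : ∀ t, 1 :: g ++ 1 :: t <:+: u → t <+: [0]) {t : List ℕ}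
    (h : 0 :: phi g ++ 0 :: 0 :: t <:+: phi u) : t <+: [1] := by
  have h' : phi (1 :: g ++ [1]) ++ 0 :: t <:+: phi u := by
    simpa [phi_cons_of_ne_zero] using h
  obtain ⟨y, hy, hphi⟩ := exists_append_infix_of_phi_append_infix
    (List.cons_subset.2 ⟨by simp, List.append_subset.2 ⟨hg, by simp⟩⟩) hu h'
  have hy0 : y = [0] := eq_singleton_of_prefix_singleton (H y (by simpa using hy))
    (by rintro rfl; simp at hphi)
  subst hy0
  simp only [phi_cons_zero, phi_nil, List.cons.injEq, true_and, List.cons_append,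
    List.self_eq_append_left] at hphi
  rcases hphi with rfl | rfl <;> simp

lemma prefix_zero_of_phi_infix_phi {g u : List ℕ} (hg : g ⊆ [0, 1]) (hu : u ⊆ [0, 1])
    (H : ∀ t, 0 :: g ++ 0 :: t <:+: u → t <+: [1]) {t : List ℕ}
    (h : 1 :: phi g ++ 0 :: 1 :: t <:+: phi u) : t <+: [0] := by
  obtain _ | ⟨a, t⟩ := t
  · exact List.nil_prefix
  have ha : a = 0 ∨ a = 1 := by simpa using phi_subset u (h.subset (by simp))
  obtain rfl | rfl := ha
  · have h' : phi (0 :: g ++ [0]) ++ 0 :: t <:+: phi u := by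
      simpa using zero_cons_infix_phi h
    obtain ⟨y, hy, hphi⟩ := exists_append_infix_of_phi_append_infix
      (List.cons_subset.2 ⟨by simp, List.append_subset.2 ⟨hg, by simp⟩⟩) hu h'
    have hy1 : y = [1] := eq_singleton_of_prefix_singleton (H y (by simpa using hy))
      (by rintro rfl; simp at hphi)
    subst hy1
    simp only [phi_singleton_one, List.cons.injEq, List.nil_eq, true_and, List.cons_append,
      List.append_eq_nil_iff, List.cons_ne_self, and_false, or_false] at hphi
    simp [hphi]
  · have h11 : [1, 1] <:+: 1 :: phi g ++ 0 :: 1 :: 1 :: t := ⟨1 :: phi g ++ [0], t, by simp⟩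
    exact absurd (h11.trans h) (not_one_one_infix_phi u)

/-- `n % 2 :: centralWord (n + 3) ++ [n % 2]` is the suffix of `fibWord (n + 5)` of length
`|fibWord (n + 3)| + 1` without its last letter `(n + 1) % 2`; it occurs nowhere else. -/
theorem prefix_singleton_of_infix_fibWord :
    ∀ (n : ℕ) {t : List ℕ}, n % 2 :: centralWord (n + 3) ++ n % 2 :: t <:+: fibWord (n + 5) →
      t <+: [(n + 1) % 2]
  | 0, t, h => by
    have ht : t ∈ ([0, 1, 0, 0, 1] : List ℕ).sublists :=
      List.mem_sublists.2 ((List.sublist_append_right [0, 0] t).trans h.sublist)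
    have key : ∀ t ∈ ([0, 1, 0, 0, 1] : List ℕ).sublists,
        [0, 0] ++ t <:+: [0, 1, 0, 0, 1] → t <+: [1] := by decide
    exact key t ht h
  | n + 1, t, h => by
    have IH := fun t => @prefix_singleton_of_infix_fibWord n t
    rw [← phi_centralWord, ← phi_fibWord] at h
    rcases Nat.mod_two_eq_zero_or_one n with hn | hn
    · rw [show (n + 1) % 2 = 1 by omega] at h
      rw [hn, show (n + 1) % 2 = 1 by omega] at IH
      rw [show (n + 1 + 1) % 2 = 0 by omega]
      exact prefix_zero_of_phi_infix_phi (centralWord_subset n) (fibWord_subset _) IH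
        (by simpa using h)
    · rw [show (n + 1) % 2 = 0 by omega] at h
      rw [hn, show (n + 1) % 2 = 0 by omega] at IH
      rw [show (n + 1 + 1) % 2 = 1 by omega]
      exact prefix_one_of_phi_infix_phi (centralWord_subset n) (fibWord_subset _) IH
        (by simpa using h)

lemma fibWord_append_zero_prefix (n : ℕ) : fibWord (n + 3) ++ [0] <+: fibWord (n + 5) := by
  rw [fibWord_add_three (n + 2), fibWord_add_three (n + 1), List.append_assoc]
  exact (List.prefix_append_right_inj _).2 ((zero_prefix_fibWord n).trans (List.prefix_append _ _))

lemma length_le_of_suffix_of_append_infix {n : ℕ} {x : List ℕ} {c : ℕ}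
    (hx : x <:+ fibWord (n + 5)) (hxc : x ++ [c] <:+: fibWord (n + 5)) :
    x.length ≤ (fibWord (n + 3)).length := by
  by_contra! hlt
  have hU : n % 2 :: fibWord (n + 3) <:+ fibWord (n + 5) := by
    refine ⟨centralWord (n + 4) ++ [(n + 1) % 2], ?_⟩
    rw [fibWord_add_three (n + 2), fibWord_eq_centralWord_append (n + 1),
      show (n + 1 + 1) % 2 = n % 2 by omega]
    simp
  have hUx : n % 2 :: fibWord (n + 3) <:+ x :=
    List.suffix_of_suffix_length_le hU hx (by simpa using hlt)
  rw [fibWord_eq_centralWord_append n] at hUx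
  have h := prefix_singleton_of_infix_fibWord n (t := [(n + 1) % 2, c])
    (by simpa using (List.suffix_append_self_iff.2 hUx).isInfix.trans hxc)
  simpa using h.length_le

lemma append_zero_suffix_of_suffix_fibWord {n : ℕ} {x : List ℕ} {c : ℕ}
    (hx : x <:+ fibWord (n + 5)) (hxc : x ++ [c] <:+: fibWord (n + 5)) :
    x ++ [0] <:+ fibWord (n + 3) ++ [0] := by
  have h3 : fibWord (n + 3) <:+ fibWord (n + 5) := by
    rw [fibWord_add_three (n + 2)]; exact List.suffix_append _ _
  exact List.suffix_append_self_iff.2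
    (List.suffix_of_suffix_length_le hx h3 (length_le_of_suffix_of_append_infix hx hxc))

lemma RightSpecial.append_suffix_dropLast_fibWord {n : ℕ} {x : List ℕ} {c : ℕ}
    (h : RightSpecial (fibWord (n + 5)) x) (hc : c = 0 ∨ c = 1) :
    x ++ [c] <:+ (fibWord (n + 4)).dropLast ∨ x ++ [c] <:+ (fibWord (n + 5)).dropLast := by
  have hx : x <:+ centralWord (n + 4) := h.suffix_centralWord
  rw [dropLast_fibWord (n + 1), dropLast_fibWord (n + 2)]
  obtain rfl | rfl : c = (n + 1) % 2 ∨ c = (n + 2) % 2 := by omega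
  · exact Or.inl (List.suffix_append_self_iff.2 hx)
  · exact Or.inr (List.suffix_append_self_iff.2 (hx.trans (centralWord_suffix (n + 1))))

lemma RightExt.cases_append_singleton {u y : List ℕ} {e : ℕ} (hu : u ⊆ [0, 1])
    (h : RightExt (u ++ [e]) y) :
    y <:+ u ++ [e] ∨ ∃ x c, y = x ++ [c] ∧ x ++ [c] <:+: u ∧ (RightSpecial u x ∨ x <:+ u) := by
  obtain ⟨x, c, ⟨a, b, hab, ha, hb⟩, rfl, hy⟩ := h
  rcases append_singleton_infix_append_singleton hy with hy | ⟨rfl, hx⟩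
  · refine Or.inr ⟨x, c, rfl, hy, ?_⟩
    rcases append_singleton_infix_append_singleton ha with ha | ⟨-, hx⟩
    · rcases append_singleton_infix_append_singleton hb with hb | ⟨-, hx⟩
      · have ha' : a = 0 ∨ a = 1 := by simpa using hu (ha.subset (by simp))
        have hb' : b = 0 ∨ b = 1 := by simpa using hu (hb.subset (by simp))
        left
        rcases ha' with rfl | rfl <;> rcases hb' with rfl | rfl
        all_goals first | exact absurd rfl hab | exact ⟨ha, hb⟩ | exact ⟨hb, ha⟩
      · exact Or.inr hx
    · exact Or.inr hx
  · exact Or.inl (List.suffix_append_self_iff.2 hx)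

theorem suffixient_fibWord (n : ℕ) :
    Suffixient (fibWord (n + 5) ++ [2])
      ([fibWord (n + 3) ++ [0], (fibWord (n + 4)).dropLast, (fibWord (n + 5)).dropLast,
        fibWord (n + 5) ++ [2]].map List.length).toFinset := by
  refine Suffixient.of_prefixes ?_ fun y hy => ?_
  · simp only [List.mem_cons, List.not_mem_nil, or_false]
    rintro p (rfl | rfl | rfl | rfl)
    · exact ⟨by simp, (fibWord_append_zero_prefix n).trans (List.prefix_append _ _)⟩
    · exact ⟨by simp [dropLast_fibWord (n + 1)],
        ((List.dropLast_prefix _).trans (List.prefix_append _ _)).trans (List.prefix_append _ _)⟩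
    · exact ⟨by simp [dropLast_fibWord (n + 2)],
        (List.dropLast_prefix _).trans (List.prefix_append _ _)⟩
    · exact ⟨by simp, List.prefix_refl _⟩
  rcases RightExt.cases_append_singleton (fibWord_subset _) hy with hy | ⟨x, c, rfl, hxc, hx⟩
  · exact ⟨_, by simp, hy⟩
  have hc : c = 0 ∨ c = 1 := by simpa using fibWord_subset _ (hxc.subset (by simp))
  by_cases hrs : RightSpecial (fibWord (n + 5)) x
  · rcases hrs.append_suffix_dropLast_fibWord hc with h | h <;> exact ⟨_, by simp, h⟩
  have h0 := append_zero_suffix_of_suffix_fibWord (hx.resolve_left hrs) hxc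
  obtain rfl : c = 0 := hc.resolve_right fun hc₁ =>
    hrs ⟨h0.isInfix.trans (fibWord_append_zero_prefix n).isInfix, hc₁ ▸ hxc⟩
  exact ⟨_, by simp, h0⟩

end FibonacciWord

theorem chi_fib_le_four_general (k : ℕ) :
    sre (fibWord k ++ [2]) ≤ 4 ∧
    ∃ S : Finset ℕ, S.card ≤ 4 ∧ Suffixient (fibWord k ++ [2]) S := by
  obtain ⟨S, hcard, hS⟩ : ∃ S : Finset ℕ, S.card ≤ 4 ∧ Suffixient (fibWord k ++ [2]) S := by
    rcases lt_or_ge k 5 with hk | hk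
    · refine ⟨_, ?_, suffixient_Icc _⟩
      interval_cases k <;> decide
    · obtain ⟨n, rfl⟩ := Nat.exists_eq_add_of_le' hk
      exact ⟨_, (List.toFinset_card_le _).trans (by simp), FibonacciWord.suffixient_fibWord n⟩
  exact ⟨hS.sre_le_card.trans hcard, S, hcard, hS⟩

theorem chi_fib_le_four (k : ℕ) (hk : 2 ≤ k) :
    sre (fibWord k ++ [2]) ≤ 4 ∧
    ∃ S : Finset ℕ, S.card ≤ 4 ∧ Suffixient (fibWord k ++ [2]) S :=
  chi_fib_le_four_general k
end

section
/- For every finite nonempty substring w of an episturmian infinite word over an alphabet of size σ ≥ 2, the right-extensions of w ending with any fixed letter a form a suffix chain (each is a suffix of the next longest one); consequently w has at most σ supermaximal right-extensions, i.e., sre(w) ≤ σ. -/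
variable {α : Type*}

/-- `x` is a (finite) factor of the infinite word `f`. -/
def InfFactor (f : ℕ → α) (x : List α) : Prop :=
  ∃ i : ℕ, x = (List.range x.length).map fun j => f (i + j)

/-- `x` is a right-maximal factor of the infinite word `f`. -/
def InfRightMaximal (f : ℕ → α) (x : List α) : Prop :=
  ∃ a b : α, a ≠ b ∧ InfFactor f (x ++ [a]) ∧ InfFactor f (x ++ [b])

/-- An infinite word is episturmian if it has at most one right-maximal factor of
each length and its set of factors is closed under reversal. -/
def Episturmian (f : ℕ → α) : Prop :=
  (∀ x y, InfRightMaximal f x → InfRightMaximal f y → x.length = y.length → x = y) ∧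
  (∀ x, InfFactor f x → InfFactor f x.reverse)

lemma infFactor_iff (f : ℕ → α) (x : List α) :
    InfFactor f x ↔ ∃ i : ℕ, ∀ j (h : j < x.length), x[j] = f (i + j) := by
  constructor
  · rintro ⟨i, hx⟩
    refine ⟨i, fun j h => ?_⟩
    rw [List.getElem_of_eq hx]
    simp
  · rintro ⟨i, hx⟩
    refine ⟨i, ?_⟩
    apply List.ext_getElem
    · simp
    · intro j h1 h2
      simp [hx j h1]

lemma infFactor_of_infix (f : ℕ → α) {w x : List α} (hw : InfFactor f w)
    (hx : x <:+: w) : InfFactor f x := by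
  rw [infFactor_iff] at hw ⊢
  obtain ⟨i, hw⟩ := hw
  obtain ⟨s, t, hst⟩ := hx
  refine ⟨i + s.length, fun j h => ?_⟩
  have hlen : s.length + j < w.length := by
    rw [← hst]; simp; omega
  have := hw (s.length + j) hlen
  rw [List.getElem_of_eq hst.symm,
    List.getElem_append_left (by rw [List.length_append]; omega),
    List.getElem_append_right (by omega)] at this
  simpa [Nat.add_assoc, Nat.add_sub_cancel_left] using this

/-- Right-maximal factors of an episturmian word form a suffix chain. -/
lemma irm_suffix_chain {f : ℕ → α} (hepi : Episturmian f) {x y : List α}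
    (hx : InfRightMaximal f x) (hy : InfRightMaximal f y)
    (hlen : x.length ≤ y.length) : x <:+ y := by
  obtain ⟨a, b, hab, ha, hb⟩ := hy
  set s := y.drop (y.length - x.length) with hs
  have hsl : s.length = x.length := by simp [hs]; omega
  have hsuf : s <:+ y := List.drop_suffix _ _
  obtain ⟨t, ht⟩ := hsuf
  have hsufa : ∀ c : α, (s ++ [c]) <:+ (y ++ [c]) := fun c =>
    ⟨t, by rw [← List.append_assoc, ht]⟩
  have hsrm : InfRightMaximal f s :=
    ⟨a, b, hab, infFactor_of_infix f ha (hsufa a).isInfix,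
      infFactor_of_infix f hb (hsufa b).isInfix⟩
  have hxs : x = s := hepi.1 x s hx hsrm hsl.symm
  exact hxs ▸ ⟨t, ht⟩

theorem sre_episturmian_factor {α : Type*} [Fintype α] (hcard : 2 ≤ Fintype.card α)
    (f : ℕ → α) (hepi : Episturmian f) (w : List α) (hw : InfFactor f w)
    (hne : w ≠ []) :
    (∀ (a : α) (y z : List α), RightExt w (y ++ [a]) → RightExt w (z ++ [a]) →
      y.length ≤ z.length → (y ++ [a]) <:+ (z ++ [a])) ∧
    sre w ≤ Fintype.card α := by
  -- a right-maximal substring of w is an inf-right-maximal factor of f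
  have key : ∀ x : List α, RightMaximal w x → InfRightMaximal f x := by
    rintro x ⟨a, b, hab, ha, hb⟩
    exact ⟨a, b, hab, infFactor_of_infix f hw ha, infFactor_of_infix f hw hb⟩
  have part1 : ∀ (a : α) (y z : List α), RightExt w (y ++ [a]) → RightExt w (z ++ [a]) →
      y.length ≤ z.length → (y ++ [a]) <:+ (z ++ [a]) := by
    intro a y z hy hz hlen
    obtain ⟨x1, c1, hrm1, heq1, _⟩ := hy
    obtain ⟨x2, c2, hrm2, heq2, _⟩ := hz
    obtain ⟨hx1, hc1⟩ := List.append_inj' heq1 rfl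
    obtain ⟨hx2, hc2⟩ := List.append_inj' heq2 rfl
    subst hx1; subst hx2
    have hsuf : y <:+ z := irm_suffix_chain hepi (key y hrm1) (key z hrm2) hlen
    obtain ⟨t, ht⟩ := hsuf
    exact ⟨t, by rw [← List.append_assoc, ht]⟩
  refine ⟨part1, ?_⟩
  -- map each supermaximal right-extension to its last letter
  have hα : Nonempty α := Fintype.card_pos_iff.mp (by omega)
  obtain ⟨d⟩ := hα
  rw [sre]
  calc {y | Supermaximal w y}.ncard ≤ (Set.univ : Set α).ncard := by
        apply Set.ncard_le_ncard_of_injOn (fun y => y.getLastD d)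
        · intro y _; trivial
        · rintro y1 hy1 y2 hy2 hlast
          obtain ⟨x1, c1, _, heq1, _⟩ := hy1.1
          obtain ⟨x2, c2, _, heq2, _⟩ := hy2.1
          have h1 : y1.getLastD d = c1 := by rw [heq1]; simp
          have h2 : y2.getLastD d = c2 := by rw [heq2]; simp
          have hc : c1 = c2 := by rw [← h1, ← h2]; exact hlast
          subst hc
          rcases le_total x1.length x2.length with h | h
          · have := part1 c1 x1 x2 (heq1 ▸ hy1.1) (heq2 ▸ hy2.1) h
            rw [← heq1, ← heq2] at this
            exact (hy1.2 y2 hy2.1 this).symm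
          · have := part1 c1 x2 x1 (heq2 ▸ hy2.1) (heq1 ▸ hy1.1) h
            rw [← heq1, ← heq2] at this
            exact hy2.2 y1 hy1.1 this
    _ = Fintype.card α := by rw [Set.ncard_univ, Nat.card_eq_fintype_card]
end
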